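/- Let φ and ψ be finite potent endomorphisms of a k-vector space V that commute, φ∘ψ = ψ∘φ. Let A ⊆ End_k(V) be the unital k-subalgebra generated by φ and ψ, and let F = φ∘A + ψ∘A = {φ∘a + ψ∘b : a, b ∈ A}. Then F is a finite potent subspace of End_k(V). -/

import Mathlib

/-- A subspace `F ⊆ End_k(V)` is a *finite potent subspace* if there is `n ≥ 1` such that
any composition of `n` elements of `F` has finite-dimensional image. -/
def IsFinitePotentSubspace {k V : Type*} [Field k] [AddCommGroup V] [Module k V]
    (F : Submodule k (V →ₗ[k] V)) : Prop :=
  ∃ n : ℕ, 1 ≤ n ∧ ∀ f : Fin n → (V →ₗ[k] V), (∀ i, f i ∈ F) →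
    FiniteDimensional k (LinearMap.range (List.ofFn f).prod)

/-!
Say `φ ^ n` and `ψ ^ m` have finite rank. Inside the commutative algebra `A`, every element of
`F` comes from the ideal `I = (φ) + (ψ)`, so a product of `n + m` or more elements of `F` comes
from `I ^ (n + m) ≤ (φ ^ n) + (ψ ^ m)`. Its image therefore lies in the finite-dimensional space
`im φ ^ n + im ψ ^ m`.
-/

section

open LinearMap

variable {k V : Type*} [Field k] [AddCommGroup V] [Module k V]

theorem IsFinitePotentSubspace.mono {F G : Submodule k (V →ₗ[k] V)} (hGF : G ≤ F)
    (hF : IsFinitePotentSubspace F) : IsFinitePotentSubspace G :=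
  let ⟨n, hn, h⟩ := hF
  ⟨n, hn, fun f hf => h f fun i => hGF (hf i)⟩

section CommAlgebra

variable {A : Type*} [CommRing A] [Algebra k A] (ρ : A →ₐ[k] Module.End k V)

theorem range_le_of_mem_span_singleton_sup_span_singleton {u v z : A}
    (hz : z ∈ Ideal.span {u} ⊔ Ideal.span {v}) :
    range (ρ z) ≤ range (ρ u) ⊔ range (ρ v) := by
  obtain ⟨_, hu, _, hv, rfl⟩ := Submodule.mem_sup.mp hz
  obtain ⟨a, rfl⟩ := Ideal.mem_span_singleton.mp hu
  obtain ⟨b, rfl⟩ := Ideal.mem_span_singleton.mp hv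
  rw [map_add, map_mul, map_mul]
  exact (range_add_le _ _).trans <|
    sup_le_sup (range_comp_le_range _ _) (range_comp_le_range _ _)

theorem isFinitePotentSubspace_map_span_sup_span {x y : A} {n m : ℕ}
    (hx : FiniteDimensional k (range (ρ x ^ n))) (hy : FiniteDimensional k (range (ρ y ^ m))) :
    IsFinitePotentSubspace
      (((Ideal.span {x} ⊔ Ideal.span {y}).restrictScalars k).map ρ.toLinearMap) := by
  set I := Ideal.span {x} ⊔ Ideal.span {y}
  refine ⟨n + m + 1, by omega, fun f hf => ?_⟩
  choose g hgI hgf using hf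
  have hprod : (List.ofFn f).prod = ρ (∏ i, g i) := by
    rw [← List.prod_ofFn, map_list_prod, List.map_ofFn]
    exact congrArg _ (List.ofFn_inj.mpr (funext hgf)).symm
  have hpow : ∏ i, g i ∈ Ideal.span {x ^ n} ⊔ Ideal.span {y ^ m} := by
    have hmem : ∏ i, g i ∈ I ^ (n + m + 1) := by
      simpa using Ideal.prod_mem_prod (s := Finset.univ) (I := fun _ => I) fun i _ => hgI i
    have hle : I ^ (n + m + 1) ≤ Ideal.span {x} ^ n ⊔ Ideal.span {y} ^ m :=
      (Ideal.pow_le_pow_right (Nat.le_succ _)).trans Ideal.sup_pow_add_le_pow_sup_pow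
    simpa only [Ideal.span_singleton_pow] using hle hmem
  have hrange : range (ρ (∏ i, g i)) ≤ range (ρ x ^ n) ⊔ range (ρ y ^ m) := by
    simpa only [map_pow] using range_le_of_mem_span_singleton_sup_span_singleton ρ hpow
  rw [hprod]
  exact Submodule.finiteDimensional_of_le hrange

end CommAlgebra

end

/-- if `φ`, `ψ` are commuting finite potent endomorphisms, and `A` is the
unital subalgebra of `End_k(V)` generated by `φ` and `ψ`, then `F = φ∘A + ψ∘A` is a
finite potent subspace of `End_k(V)`. -/
theorem isFinitePotentSubspace_of_commute
    {k V : Type*} [Field k] [AddCommGroup V] [Module k V]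
    (φ ψ : V →ₗ[k] V)
    (hφ : ∃ n : ℕ, 1 ≤ n ∧ FiniteDimensional k (LinearMap.range (φ ^ n)))
    (hψ : ∃ n : ℕ, 1 ≤ n ∧ FiniteDimensional k (LinearMap.range (ψ ^ n)))
    (hcomm : φ * ψ = ψ * φ)
    (A : Subalgebra k (V →ₗ[k] V)) (hA : A = Algebra.adjoin k {φ, ψ})
    (F : Submodule k (V →ₗ[k] V))
    (hF : F = Submodule.map (LinearMap.mulLeft k φ) (Subalgebra.toSubmodule A)
            ⊔ Submodule.map (LinearMap.mulLeft k ψ) (Subalgebra.toSubmodule A)) :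
    IsFinitePotentSubspace F := by
  obtain ⟨n, -, hφn⟩ := hφ
  obtain ⟨m, -, hψm⟩ := hψ
  subst hA hF
  have : IsMulCommutative (Algebra.adjoin k {φ, ψ}) := Algebra.isMulCommutative_adjoin k <| by
    simp only [Set.mem_insert_iff, Set.mem_singleton_iff]
    rintro a (rfl | rfl) b (rfl | rfl) <;> first | rfl | exact hcomm | exact hcomm.symm
  open scoped IsMulCommutative in
  let B := Algebra.adjoin k {φ, ψ}
  have hmulLeft (z : B) : (Subalgebra.toSubmodule B).map (LinearMap.mulLeft k (z : V →ₗ[k] V))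
      ≤ ((Ideal.span {z}).restrictScalars k).map B.val.toLinearMap := by
    rintro _ ⟨a, ha, rfl⟩
    exact ⟨z * ⟨a, ha⟩, Ideal.mul_mem_right _ _ (Ideal.mem_span_singleton_self z), rfl⟩
  let x : B := ⟨φ, Algebra.subset_adjoin (by simp)⟩
  let y : B := ⟨ψ, Algebra.subset_adjoin (by simp)⟩
  refine (isFinitePotentSubspace_map_span_sup_span B.val (x := x) (y := y) hφn hψm).mono <|
    sup_le ?_ ?_
  · exact (hmulLeft x).trans (Submodule.map_mono (Submodule.restrictScalars_mono k le_sup_left))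
  · exact (hmulLeft y).trans (Submodule.map_mono (Submodule.restrictScalars_mono k le_sup_right))
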